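/- The series Σ_{n=1}^∞ φ(n)/(2^n − 1) converges and equals 2, where φ is Euler's totient function. -/
import Mathlib

open Nat

noncomputable def Ff : ℕ × ℕ → ℝ :=
  fun p => (Nat.totient (p.1 + 1) : ℝ) * (1/2 : ℝ) ^ ((p.1 + 1) * (p.2 + 1))

def eDiv : (Σ m : ℕ, {d : ℕ // d ∈ (m+1).divisors}) ≃ ℕ × ℕ where
  toFun x := (x.2.1 - 1, (x.1 + 1) / x.2.1 - 1)
  invFun p := ⟨(p.1 + 1) * (p.2 + 1) - 1, ⟨p.1 + 1, by
    have h : 1 ≤ (p.1 + 1) * (p.2 + 1) := Nat.one_le_iff_ne_zero.mpr (Nat.mul_ne_zero (Nat.succ_ne_zero _) (Nat.succ_ne_zero _))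
    rw [Nat.mem_divisors]
    exact ⟨⟨p.2 + 1, by omega⟩, by omega⟩⟩⟩
  left_inv := by
    rintro ⟨m, d, hd⟩
    rw [Nat.mem_divisors] at hd
    obtain ⟨⟨c, hc⟩, -⟩ := hd
    have hd1 : 1 ≤ d := by nlinarith
    have hc1 : 1 ≤ c := by nlinarith
    have hdiv : (m + 1) / d = c := by rw [hc]; exact Nat.mul_div_cancel_left c (by omega)
    have h1 : d - 1 + 1 = d := by omega
    have h2 : c - 1 + 1 = c := by omega
    refine Sigma.subtype_ext ?_ ?_ <;> simp only [hdiv, h1, h2] <;> omega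
  right_inv := by
    rintro ⟨n, k⟩
    have h : 1 ≤ (n + 1) * (k + 1) := Nat.one_le_iff_ne_zero.mpr (Nat.mul_ne_zero (Nat.succ_ne_zero _) (Nat.succ_ne_zero _))
    have h2 : (n + 1) * (k + 1) - 1 + 1 = (n + 1) * (k + 1) := by omega
    have h3 : (n + 1) * (k + 1) / (n + 1) = k + 1 := Nat.mul_div_cancel_left _ (by omega)
    simp only [h2, h3]
    ext <;> simp

lemma key_fiber (m : ℕ) (d : {d : ℕ // d ∈ (m+1).divisors}) :
    Ff (eDiv ⟨m, d⟩) = (Nat.totient d.1 : ℝ) * (1/2 : ℝ) ^ (m + 1) := by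
  obtain ⟨d, hd⟩ := d
  rw [Nat.mem_divisors] at hd
  obtain ⟨hdvd, -⟩ := hd
  have hd1 : 1 ≤ d := Nat.pos_of_dvd_of_pos hdvd (by omega)
  have hc1 : 1 ≤ (m + 1) / d := Nat.one_le_div_iff (by omega) |>.mpr (Nat.le_of_dvd (by omega) hdvd)
  have h1 : d - 1 + 1 = d := by omega
  have h2 : (m + 1) / d - 1 + 1 = (m + 1) / d := by omega
  have h3 : d * ((m + 1) / d) = m + 1 := Nat.mul_div_cancel' hdvd
  simp only [Ff, eDiv, Equiv.coe_fn_mk, h1, h2, h3]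

theorem totient_series_eq_two :
    HasSum (fun n : ℕ => (Nat.totient (n + 1) : ℝ) / (2 ^ (n + 1) - 1)) 2 := by
  -- Step 1: HasSum (fun m => (m+1) * (1/2)^(m+1)) 2
  have hgeom : HasSum (fun m : ℕ => ((m : ℝ) + 1) * (1/2 : ℝ) ^ (m + 1)) 2 := by
    have h := hasSum_coe_mul_geometric_of_norm_lt_one (𝕜 := ℝ) (r := 1/2) (by norm_num)
    have h2 : ((1/2 : ℝ)) / (1 - 1/2) ^ 2 = 2 := by norm_num
    rw [h2] at h
    have h3 := (hasSum_nat_add_iff' (f := fun n : ℕ => (n : ℝ) * (1/2 : ℝ) ^ n) 1).mpr (by simpa using h)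
    have h4 : (2 : ℝ) - ∑ i ∈ Finset.range 1, (i:ℝ) * (1/2:ℝ)^i = 2 := by simp
    rw [h4] at h3
    exact h3.congr_fun fun m => by push_cast; ring
  -- Step 2: fiberwise sums over divisors
  have hfiber : ∀ m : ℕ, HasSum (fun d : {d : ℕ // d ∈ (m+1).divisors} => Ff (eDiv ⟨m, d⟩))
      (((m : ℝ) + 1) * (1/2 : ℝ) ^ (m + 1)) := by
    intro m
    have h := Finset.hasSum ((m+1).divisors) (fun d => (Nat.totient d : ℝ) * (1/2 : ℝ) ^ (m + 1))
    have hsum : ∑ d ∈ (m+1).divisors, (Nat.totient d : ℝ) * (1/2 : ℝ) ^ (m + 1)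
        = ((m : ℝ) + 1) * (1/2 : ℝ) ^ (m + 1) := by
      rw [← Finset.sum_mul]
      congr 1
      rw [← Nat.cast_sum]
      rw [Nat.sum_totient]
      push_cast; ring
    rw [hsum] at h
    exact h.congr_fun fun d => key_fiber m d
  -- Step 3: summability on the sigma type
  have hnn : ∀ x : (Σ m : ℕ, {d : ℕ // d ∈ (m+1).divisors}), 0 ≤ Ff (eDiv x) := by
    rintro ⟨m, d⟩
    rw [key_fiber]
    positivity
  have hsummable : Summable (fun x : (Σ m : ℕ, {d : ℕ // d ∈ (m+1).divisors}) => Ff (eDiv x)) := by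
    rw [summable_sigma_of_nonneg hnn]
    refine ⟨fun m => (hfiber m).summable, ?_⟩
    apply Summable.congr hgeom.summable
    intro m
    exact ((hfiber m).tsum_eq).symm
  -- Step 4: HasSum Ff 2
  have hFf : HasSum Ff 2 := by
    rw [← eDiv.hasSum_iff]
    exact HasSum.sigma_of_hasSum hgeom hfiber hsummable
  -- Step 5: rows
  refine hFf.prod_fiberwise ?_
  intro n
  have hr : |(1/2 : ℝ) ^ (n + 1)| < 1 := by
    rw [abs_of_nonneg (by positivity)]
    exact pow_lt_one₀ (by norm_num) (by norm_num) (by omega)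
  have hg := hasSum_geometric_of_abs_lt_one hr
  have h := hg.mul_left ((Nat.totient (n+1) : ℝ) * (1/2 : ℝ) ^ (n + 1))
  have hpow : (2:ℝ) ^ (n+1) ≥ 2 := by
    calc (2:ℝ)^(n+1) ≥ 2^1 := by apply pow_le_pow_right₀ (by norm_num) (by omega)
    _ = 2 := by norm_num
  have hne : (2:ℝ) ^ (n+1) - 1 ≠ 0 := by nlinarith
  have hne2 : (1 : ℝ) - (1/2:ℝ)^(n+1) ≠ 0 := by
    have : (1/2:ℝ)^(n+1) < 1 := by rwa [abs_of_nonneg (by positivity)] at hr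
    nlinarith
  have hval : (Nat.totient (n+1) : ℝ) * (1/2 : ℝ) ^ (n + 1) * (1 - (1/2:ℝ)^(n+1))⁻¹
      = (Nat.totient (n + 1) : ℝ) / (2 ^ (n + 1) - 1) := by
    have hx : ((1:ℝ)/2) ^ (n+1) = ((2:ℝ) ^ (n+1))⁻¹ := by
      rw [one_div, inv_pow]
    have h2pos : (0:ℝ) < 2 ^ (n+1) := by positivity
    rw [hx, div_eq_mul_inv, mul_assoc]
    congr 1
    rw [show (1:ℝ) - ((2:ℝ)^(n+1))⁻¹ = ((2:ℝ)^(n+1) - 1)/2^(n+1) by field_simp, inv_div]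
    field_simp
  rw [hval] at h
  apply h.congr_fun
  intro k
  simp only [Ff]
  rw [pow_mul, pow_succ]
  ring
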